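/- There exist absolute positive real constants c₁ and c₂ such that c₁·(q^n/n) ≤ C(n,q) ≤ c₂·(q^n/n) for all integers n and q with n ≥ 2 and q ≥ 2. -/

import Mathlib

/-- Two words `u` and `v` of length `n` over alphabet `F` are overlapping if some
non-empty proper prefix of one equals a non-empty proper suffix of the other. -/
def Overlapping {F : Type*} {n : ℕ} (u v : Fin n → F) : Prop :=
  ∃ m : ℕ, ∃ _h1 : 0 < m, ∃ h2 : m < n,
    ((∀ i : ℕ, ∀ hi : i < m, u ⟨i, hi.trans h2⟩ = v ⟨n - m + i, by omega⟩) ∨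
     (∀ i : ℕ, ∀ hi : i < m, v ⟨i, hi.trans h2⟩ = u ⟨n - m + i, by omega⟩))

/-- A code `C ⊆ F^n` is non-overlapping if every two (not necessarily distinct)
codewords are non-overlapping. -/
def NonOverlappingCode {F : Type*} {n : ℕ} (C : Set (Fin n → F)) : Prop :=
  ∀ u ∈ C, ∀ v ∈ C, ¬ Overlapping u v

/-- `maxNOCode n q` is `C(n,q)`, the maximum cardinality of a non-overlapping
`q`-ary code of length `n`. -/
noncomputable def maxNOCode (n q : ℕ) : ℕ :=
  sSup {m | ∃ C : Set (Fin n → Fin q), NonOverlappingCode C ∧ C.ncard = m}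


/-!
Upper bound: writing a codeword `u` at offset `i < n` inside a word of length `2n - 1` and
filling the other `n - 1` positions arbitrarily gives pairwise distinct words, because the same
word carrying two codewords at different offsets would exhibit an overlap. Hence
`|C| · n · q^(n-1) ≤ q^(2n-1)`.

Lower bound: call the letters of a set `I` of `⌊q/2⌋` letters small. The words that begin with
`k` small letters, carry large letters at positions `k` and `n - 1`, and have no `k` consecutive
small letters after position `k` are non-overlapping: an overlap would match the small prefix of
one word against a stretch of the other containing a large letter. At least
`|I|^k q^(n-k) / 4` words satisfy the first two conditions and at most
`n |I|^(2k) q^(n-2k)` of those violate the third; taking `k` least with `8 n |I|^k ≤ q^k`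
makes this loss at most half, while `|I|^k q^(n-k) ≥ q^n / (32 n)`.
-/

open Finset Function

section Placement

variable {α : Type*} {n : ℕ}

/-- The word of length `2n - 1` carrying `u` at positions `i, …, i + n - 1`, with the other
`n - 1` positions filled by `x` from left to right. -/
def placeAt (u : Fin n → α) (i : Fin n) (x : Fin (n - 1) → α) (j : Fin (2 * n - 1)) : α :=
  if h : (i : ℕ) ≤ j ∧ (j : ℕ) < i + n then u ⟨j - i, by omega⟩
  else if h' : (j : ℕ) < i then x ⟨j, by omega⟩
  else x ⟨j - n, by omega⟩

variable {u : Fin n → α} {i : Fin n} {x : Fin (n - 1) → α} {j : Fin (2 * n - 1)}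

lemma placeAt_apply_of_eq_add {t : Fin n} (hj : (j : ℕ) = i + t) : placeAt u i x j = u t := by
  rw [placeAt, dif_pos (by omega)]
  exact congrArg _ (Fin.ext (by simp; omega))

lemma placeAt_apply_of_lt {t : Fin (n - 1)} (hj : (j : ℕ) = t) (ht : (t : ℕ) < i) :
    placeAt u i x j = x t := by
  rw [placeAt, dif_neg (by omega), dif_pos (by omega)]
  exact congrArg _ (Fin.ext (by simp; omega))

lemma placeAt_apply_of_le {t : Fin (n - 1)} (hj : (j : ℕ) = t + n) (ht : (i : ℕ) ≤ t) :
    placeAt u i x j = x t := by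
  rw [placeAt, dif_neg (by omega), dif_neg (by omega)]
  exact congrArg _ (Fin.ext (by simp; omega))

lemma overlapping_of_placeAt_eq {u' : Fin n → α} {i' : Fin n} {x' : Fin (n - 1) → α}
    (h : placeAt u i x = placeAt u' i' x') (hlt : i < i') : Overlapping u' u := by
  have hi' := i'.isLt
  refine ⟨n - (i' - i), by omega, by omega, Or.inl fun t ht => ?_⟩
  calc u' ⟨t, _⟩ = placeAt u' i' x' ⟨i' + t, by omega⟩ := (placeAt_apply_of_eq_add rfl).symm
    _ = placeAt u i x ⟨i' + t, by omega⟩ := by rw [h]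
    _ = u ⟨n - (n - (i' - i)) + t, _⟩ := placeAt_apply_of_eq_add (by simp; omega)

lemma placeAt_injective {C : Set (Fin n → α)} (hC : NonOverlappingCode C) :
    Injective fun p : C × Fin n × (Fin (n - 1) → α) => placeAt p.1 p.2.1 p.2.2 := by
  rintro ⟨⟨u, hu⟩, i, x⟩ ⟨⟨u', hu'⟩, i', x'⟩ (h : placeAt u i x = placeAt u' i' x')
  obtain rfl : i = i' := by
    rcases lt_trichotomy i i' with hlt | rfl | hlt
    · exact absurd (overlapping_of_placeAt_eq h hlt) (hC u' hu' u hu)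
    · rfl
    · exact absurd (overlapping_of_placeAt_eq h.symm hlt) (hC u hu u' hu')
  have hi := i.isLt
  obtain rfl : u = u' := funext fun t => by
    have ht := t.isLt
    let j : Fin (2 * n - 1) := ⟨i + t, by omega⟩
    exact (placeAt_apply_of_eq_add rfl).symm.trans
      ((congrFun h j).trans (placeAt_apply_of_eq_add rfl))
  obtain rfl : x = x' := funext fun t => by
    have ht := t.isLt
    by_cases hti : (t : ℕ) < i
    · let j : Fin (2 * n - 1) := ⟨t, by omega⟩
      exact (placeAt_apply_of_lt rfl hti).symm.trans
        ((congrFun h j).trans (placeAt_apply_of_lt rfl hti))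
    · let j : Fin (2 * n - 1) := ⟨t + n, by omega⟩
      exact (placeAt_apply_of_le rfl (by omega)).symm.trans
        ((congrFun h j).trans (placeAt_apply_of_le rfl (by omega)))
  rfl

theorem ncard_mul_le_pow [Fintype α] [Nonempty α] {C : Set (Fin n → α)}
    (hC : NonOverlappingCode C) : C.ncard * n ≤ Fintype.card α ^ n := by
  have h := Nat.card_le_card_of_injective _ (placeAt_injective hC)
  simp only [Nat.card_coe_set_eq, Nat.card_prod, Nat.card_eq_fintype_card, Fintype.card_prod,
    Fintype.card_fun, Fintype.card_fin] at h
  rcases n with _ | n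
  · simp
  rw [show 2 * (n + 1) - 1 = (n + 1) + n by omega, pow_add, ← mul_assoc] at h
  exact Nat.le_of_mul_le_mul_right h (by positivity)

end Placement

lemma Fin.card_filter_val_mem {n : ℕ} {T : Finset ℕ} (hT : T ⊆ range n) :
    #{a : Fin n | (a : ℕ) ∈ T} = #T := by
  rw [← card_map Fin.valEmbedding]
  congr 1
  ext x
  simp only [mem_map, mem_filter, mem_univ, true_and, Fin.valEmbedding_apply]
  exact ⟨fun ⟨a, ha, hax⟩ => hax ▸ ha,
    fun hx => ⟨⟨x, mem_range.mp (hT hx)⟩, hx, rfl⟩⟩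

section WindowCode

variable {α : Type*} [Fintype α] (I : Finset α) (n : ℕ)

def smallOn (T : Finset ℕ) : Finset (Fin n → α) :=
  Fintype.piFinset fun a => if (a : ℕ) ∈ T then I else univ

lemma card_smallOn {T : Finset ℕ} (hT : T ⊆ range n) :
    #(smallOn I n T) = #I ^ #T * Fintype.card α ^ (n - #T) := by
  have hcompl : #{a : Fin n | (a : ℕ) ∉ T} = n - #T := by
    have h := card_filter_add_card_filter_not (s := univ) fun a : Fin n => (a : ℕ) ∈ T
    rw [card_univ, Fintype.card_fin, Fin.card_filter_val_mem hT] at h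
    omega
  simp only [smallOn, Fintype.card_piFinset, apply_ite card, card_univ]
  rw [prod_ite, prod_const, prod_const, Fin.card_filter_val_mem hT, hcompl]

variable [DecidableEq α]

def framedWords (k : ℕ) : Finset (Fin n → α) :=
  Fintype.piFinset fun a =>
    if (a : ℕ) < k then I else if (a : ℕ) ∈ ({k, n - 1} : Finset ℕ) then Iᶜ else univ

def windowCode (k : ℕ) : Finset (Fin n → α) :=
  (framedWords I n k).filter fun w =>
    ∀ j ∈ Ioc k (n - k), ∃ a : Fin n, j ≤ a ∧ (a : ℕ) < j + k ∧ w a ∉ I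

variable {I n} {k : ℕ}

lemma not_prefix_eq_suffix_of_mem_windowCode (hkn : k < n) {u v : Fin n → α}
    (hu : u ∈ windowCode I n k) (hv : v ∈ windowCode I n k) {m : ℕ} (hm : 0 < m)
    (hmn : m < n) :
    ¬ ∀ i : ℕ, ∀ hi : i < m, u ⟨i, hi.trans hmn⟩ = v ⟨n - m + i, by omega⟩ := by
  simp only [windowCode, framedWords, mem_filter, Fintype.mem_piFinset] at hu hv
  obtain ⟨hu, -⟩ := hu
  obtain ⟨hv, hvw⟩ := hv
  have hsmall : ∀ a : Fin n, (a : ℕ) < k → u a ∈ I := fun a ha => by simpa [ha] using hu a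
  have hlarge : ∀ a : Fin n, ((a : ℕ) = k ∨ (a : ℕ) = n - 1) → v a ∉ I := fun a ha => by
    simpa [show ¬ (a : ℕ) < k by omega, ha] using hv a
  -- a position of the overlap where `u` is small but `v` is large
  obtain ⟨i, him, hik, b, hb, hvb⟩ :
      ∃ i < m, i < k ∧ ∃ b : Fin n, (b : ℕ) = n - m + i ∧ v b ∉ I := by
    rcases le_or_gt m k with hmk | hkm
    · exact ⟨m - 1, by omega, by omega, ⟨n - 1, by omega⟩, by simp only; omega,
        hlarge _ (by simp)⟩
    rcases le_or_gt (n - m) k with hmk' | hkm'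
    · exact ⟨k - (n - m), by omega, by omega, ⟨k, hkn⟩, by simp; omega, hlarge _ (by simp)⟩
    obtain ⟨a, hja, hak, ha⟩ := hvw (n - m) (mem_Ioc.mpr ⟨hkm', by omega⟩)
    exact ⟨a - (n - m), by omega, by omega, a, by omega, ha⟩
  intro h
  have huv := h i him
  rw [show (⟨n - m + i, _⟩ : Fin n) = b from Fin.ext hb.symm] at huv
  exact hvb (huv ▸ hsmall ⟨i, by omega⟩ hik)

theorem windowCode_nonOverlapping (hkn : k < n) :
    NonOverlappingCode (windowCode I n k : Set (Fin n → α)) := by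
  rintro u hu v hv ⟨m, hm, hmn, h | h⟩
  · exact not_prefix_eq_suffix_of_mem_windowCode hkn hu hv hm hmn h
  · exact not_prefix_eq_suffix_of_mem_windowCode hkn hv hu hm hmn h

lemma card_smallOn_range_le (hI : 2 * #I ≤ Fintype.card α) (hkn : k < n) :
    #(smallOn I n (range k)) ≤ 4 * #(framedWords I n k) := by
  set S : Finset ℕ := {k, n - 1}
  have hS : #{a : Fin n | (a : ℕ) ∈ S} ≤ 2 := by
    rw [Fin.card_filter_val_mem (by intro x; simp [S]; omega)]
    exact card_le_two
  simp only [smallOn, framedWords, Fintype.card_piFinset]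
  -- only the two positions in `S` lose a factor, and that factor is at most `2`
  calc ∏ a : Fin n, #(if (a : ℕ) ∈ range k then I else univ)
      ≤ ∏ a : Fin n, ((if (a : ℕ) ∈ S then 2 else 1) *
          #(if (a : ℕ) < k then I else if (a : ℕ) ∈ S then Iᶜ else univ)) :=
        prod_le_prod' fun a _ => by
          simp only [mem_range]
          split_ifs <;> (try simp only [card_compl, card_univ]) <;> omega
    _ = 2 ^ #{a : Fin n | (a : ℕ) ∈ S} *
        ∏ a : Fin n, #(if (a : ℕ) < k then I else if (a : ℕ) ∈ S then Iᶜ else univ) := by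
        rw [prod_mul_distrib, prod_ite, prod_const, prod_const_one, mul_one]
    _ ≤ 4 * _ := Nat.mul_le_mul_right _ (pow_le_pow_right₀ one_le_two hS)

lemma card_framedWords_le :
    #(framedWords I n k) ≤
      #(windowCode I n k) + (n - 2 * k) * (#I ^ (2 * k) * Fintype.card α ^ (n - 2 * k)) := by
  have hsplit := card_filter_add_card_filter_not (s := framedWords I n k)
    fun w => ∀ j ∈ Ioc k (n - k), ∃ a : Fin n, j ≤ a ∧ (a : ℕ) < j + k ∧ w a ∉ I
  rw [← hsplit, windowCode]
  gcongr
  have hbad : {w ∈ framedWords I n k |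
      ¬ ∀ j ∈ Ioc k (n - k), ∃ a : Fin n, j ≤ a ∧ (a : ℕ) < j + k ∧ w a ∉ I} ⊆
      (Ioc k (n - k)).biUnion fun j => smallOn I n (range k ∪ Ico j (j + k)) := by
    intro w hw
    simp only [mem_filter, framedWords, Fintype.mem_piFinset] at hw
    push Not at hw
    obtain ⟨hw, j, hj, hjw⟩ := hw
    refine mem_biUnion.mpr ⟨j, hj, Fintype.mem_piFinset.mpr fun a => ?_⟩
    split_ifs with ha
    · rcases mem_union.mp ha with ha | ha
      · simpa [mem_range.mp ha] using hw a
      · exact hjw a (mem_Ico.mp ha).1 (mem_Ico.mp ha).2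
    · exact mem_univ _
  calc _ ≤ #((Ioc k (n - k)).biUnion fun j => smallOn I n (range k ∪ Ico j (j + k))) :=
        card_le_card hbad
    _ ≤ ∑ j ∈ Ioc k (n - k), #(smallOn I n (range k ∪ Ico j (j + k))) := card_biUnion_le
    _ = ∑ j ∈ Ioc k (n - k), #I ^ (2 * k) * Fintype.card α ^ (n - 2 * k) := by
        refine sum_congr rfl fun j hj => ?_
        have hj := mem_Ioc.mp hj
        have hcard : #(range k ∪ Ico j (j + k)) = 2 * k := by
          rw [card_union_of_disjoint (disjoint_left.mpr fun x hx hx' => by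
            simp only [mem_range, mem_Ico] at hx hx'; omega), card_range, Nat.card_Ico]
          omega
        have hsub : range k ∪ Ico j (j + k) ⊆ range n := fun x hx => by
          simp only [mem_union, mem_range, mem_Ico] at hx ⊢
          omega
        rw [card_smallOn I n hsub, hcard]
    _ = _ := by rw [sum_const, Nat.card_Ioc, smul_eq_mul, show n - k - k = n - 2 * k by omega]

end WindowCode

lemma exists_window_length {n s q : ℕ} (hn : 2 ≤ n) (hs : 2 * s ≤ q) (hq : q ≤ 4 * s) :
    ∃ k < n, 8 * (n - 2 * k) * s ^ k ≤ q ^ k ∧ q ^ k ≤ 32 * n * s ^ k := by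
  have hex : ∃ m, 8 * n * s ^ m ≤ q ^ m := ⟨8 * n, calc
    8 * n * s ^ (8 * n) ≤ 2 ^ (8 * n) * s ^ (8 * n) :=
      Nat.mul_le_mul_right _ Nat.lt_two_pow_self.le
    _ = (2 * s) ^ (8 * n) := (mul_pow ..).symm
    _ ≤ q ^ (8 * n) := Nat.pow_le_pow_left hs _⟩
  have hfind : Nat.find hex ≠ 0 := fun h => by
    have := Nat.find_spec hex
    rw [h, pow_zero, pow_zero, mul_one] at this
    omega
  -- the least `k` with `8 n s^k ≤ q^k`, capped at `n - 1` where no window fits any more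
  refine ⟨min (Nat.find hex) (n - 1), by omega, ?_, ?_⟩
  · rcases min_cases (Nat.find hex) (n - 1) with ⟨hk, -⟩ | ⟨hk, -⟩ <;> rw [hk]
    · exact (Nat.mul_le_mul_right _ (by omega)).trans (Nat.find_spec hex)
    · simp [show n - 2 * (n - 1) = 0 by omega]
  · obtain ⟨k, hk⟩ : ∃ k, min (Nat.find hex) (n - 1) = k + 1 :=
      ⟨_, (Nat.succ_pred (by omega)).symm⟩
    rw [hk]
    have hmin : q ^ k < 8 * n * s ^ k := not_le.mp (Nat.find_min hex (by omega))
    calc q ^ (k + 1) = q ^ k * q := pow_succ ..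
      _ ≤ 8 * n * s ^ k * (4 * s) := Nat.mul_le_mul hmin.le hq
      _ = 32 * n * s ^ (k + 1) := by ring

theorem exists_nonOverlapping_card_ge {α : Type*} [Fintype α] [DecidableEq α] {n : ℕ}
    (hn : 2 ≤ n) (hα : 2 ≤ Fintype.card α) :
    ∃ C : Finset (Fin n → α), NonOverlappingCode (C : Set (Fin n → α)) ∧
      Fintype.card α ^ n ≤ 256 * n * #C := by
  set q := Fintype.card α with hq
  obtain ⟨I, -, hI⟩ := exists_subset_card_eq (s := (univ : Finset α)) (n := q / 2)
    (by rw [card_univ]; omega)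
  obtain ⟨k, hkn, hbad, hgood⟩ :=
    exists_window_length (s := #I) (q := q) hn (by omega) (by omega)
  refine ⟨windowCode I n k, windowCode_nonOverlapping hkn, ?_⟩
  have hframed := card_smallOn_range_le (I := I) (by omega) hkn
  rw [card_smallOn I n (range_subset_range.mpr hkn.le), card_range] at hframed
  have hcode := card_framedWords_le (I := I) (n := n) (k := k)
  rw [← hq] at hframed hcode
  have hwindows :
      8 * ((n - 2 * k) * (#I ^ (2 * k) * q ^ (n - 2 * k))) ≤ #I ^ k * q ^ (n - k) := by
    rcases Nat.eq_zero_or_pos (n - 2 * k) with h0 | hpos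
    · simp [h0]
    calc 8 * ((n - 2 * k) * (#I ^ (2 * k) * q ^ (n - 2 * k)))
        = 8 * (n - 2 * k) * #I ^ k * (#I ^ k * q ^ (n - 2 * k)) := by
          rw [two_mul, pow_add]; ring
      _ ≤ q ^ k * (#I ^ k * q ^ (n - 2 * k)) := Nat.mul_le_mul_right _ hbad
      _ = #I ^ k * q ^ (n - k) := by
        rw [mul_left_comm, ← pow_add, show k + (n - 2 * k) = n - k by omega]
  have hmain : #I ^ k * q ^ (n - k) ≤ 8 * #(windowCode I n k) := by omega
  calc q ^ n = q ^ k * q ^ (n - k) := by rw [← pow_add, Nat.add_sub_cancel' hkn.le]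
    _ ≤ 32 * n * #I ^ k * q ^ (n - k) := Nat.mul_le_mul_right _ hgood
    _ ≤ 32 * n * (8 * #(windowCode I n k)) := by
      rw [mul_assoc]; exact Nat.mul_le_mul_left _ hmain
    _ = 256 * n * #(windowCode I n k) := by ring

lemma bddAbove_nonOverlapping_ncard (n q : ℕ) :
    BddAbove {m | ∃ C : Set (Fin n → Fin q), NonOverlappingCode C ∧ C.ncard = m} :=
  ⟨Nat.card (Fin n → Fin q), by rintro _ ⟨C, -, rfl⟩; exact Set.ncard_le_card C⟩

lemma ncard_le_maxNOCode {n q : ℕ} {C : Set (Fin n → Fin q)} (hC : NonOverlappingCode C) :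
    C.ncard ≤ maxNOCode n q :=
  le_csSup (bddAbove_nonOverlapping_ncard n q) ⟨C, hC, rfl⟩

lemma exists_ncard_eq_maxNOCode (n q : ℕ) :
    ∃ C : Set (Fin n → Fin q), NonOverlappingCode C ∧ C.ncard = maxNOCode n q :=
  show maxNOCode n q ∈
      {m | ∃ C : Set (Fin n → Fin q), NonOverlappingCode C ∧ C.ncard = m} from
    Nat.sSup_mem ⟨0, ∅, fun _ hu => hu.elim, Set.ncard_empty _⟩
      (bddAbove_nonOverlapping_ncard n q)

/-- Theorem 6 of Blackburn, "Non-overlapping codes": there are absolute positive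
constants `c₁, c₂` with `c₁ q^n/n ≤ C(n,q) ≤ c₂ q^n/n` for all `n, q ≥ 2`. -/
theorem stmt18 :
    ∃ c₁ c₂ : ℝ, 0 < c₁ ∧ 0 < c₂ ∧
      ∀ n q : ℕ, 2 ≤ n → 2 ≤ q →
        c₁ * ((q : ℝ) ^ n / (n : ℝ)) ≤ (maxNOCode n q : ℝ) ∧
        (maxNOCode n q : ℝ) ≤ c₂ * ((q : ℝ) ^ n / (n : ℝ)) := by
  refine ⟨1 / 256, 1, by norm_num, one_pos, fun n q hn hq => ⟨?_, ?_⟩⟩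
  · obtain ⟨C, hC, hcard⟩ := exists_nonOverlapping_card_ge (α := Fin q) hn (by simpa using hq)
    have hmax := ncard_le_maxNOCode hC
    rw [Set.ncard_coe_finset] at hmax
    rw [Fintype.card_fin] at hcard
    have hq : (q : ℝ) ^ n ≤ 256 * n * maxNOCode n q := by
      exact_mod_cast hcard.trans (Nat.mul_le_mul_left _ hmax)
    rw [mul_div_assoc', div_le_iff₀ (by positivity)]
    linarith
  · obtain ⟨C, hC, hmax⟩ := exists_ncard_eq_maxNOCode n q
    have : NeZero q := ⟨by omega⟩
    have h := ncard_mul_le_pow hC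
    rw [hmax, Fintype.card_fin] at h
    rw [one_mul, le_div_iff₀ (by positivity)]
    exact_mod_cast h
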